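/- arXiv:1908.00261 — 3 statements merged into one kernel-verified Lean document; each statement's English description precedes it below -/
import Mathlib

section
/- (Smoothness of linear functionals of the softmax) Fix a finite set A and c ∈ ℝ^A, and define F : ℝ^A → ℝ by F(θ) = Σ_{a∈A} σ(θ)_a c_a, where σ(θ)_a = exp(θ_a)/Σ_{a′} exp(θ_{a′}) is the softmax. Then F has 5‖c‖_∞-Lipschitz gradient: ‖∇F(θ) − ∇F(θ′)‖₂ ≤ 5‖c‖_∞ ‖θ − θ′‖₂ for all θ, θ′ ∈ ℝ^A. Equivalently, the Hessian satisfies ‖∇²F(θ)‖₂ ≤ 5‖c‖_∞ for all θ, where ∇²F(θ) = diag(σ(θ)⊙c) − σ(θ)(σ(θ)⊙c)ᵀ − (σ(θ)·c)(diag(σ(θ)) − σ(θ)σ(θ)ᵀ) − (σ(θ)⊙c − (σ(θ)·c)σ(θ))σ(θ)ᵀ. -/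
/-!
The gradient of `F θ = softmax θ ⬝ᵥ c` is `Cov(softmax θ) c`, where `Cov p = diag p - p pᵀ` is
the covariance matrix of the categorical distribution `p` and also the Jacobian of `softmax`.
For probability vectors `p, q`,
`Cov p c - Cov q c = (p - q) ⊙ c - (p ⬝ᵥ c) (p - q) - (p ⬝ᵥ c - q ⬝ᵥ c) q`,
whose Euclidean norm is at most `2 ‖c‖_∞ ‖p - q‖ + |p ⬝ᵥ c - q ⬝ᵥ c|`. Now `softmax` is
`2`-Lipschitz since `‖Cov p‖ ≤ 2`, and `F` is `‖c‖_∞`-Lipschitz since `‖Cov p c‖²` is at most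
the variance of `c` under `p`, hence at most `‖c‖_∞²`. This gives `2 · 2 + 1 = 5`.
-/

open scoped RealInnerProductSpace
open Matrix WithLp

theorem norm_toLp_mul_le {𝕜 ι : Type*} [RCLike 𝕜] [Fintype ι] (w v : ι → 𝕜) :
    ‖toLp 2 (w * v)‖ ≤ ‖w‖ * ‖toLp 2 v‖ := by
  refine le_of_sq_le_sq ?_ (by positivity)
  simp only [mul_pow, EuclideanSpace.norm_sq_eq, Pi.mul_apply, norm_mul, Finset.mul_sum]
  exact Finset.sum_le_sum fun a _ => mul_le_mul_of_nonneg_right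
    (pow_le_pow_left₀ (norm_nonneg _) (norm_le_pi_norm w a) 2) (sq_nonneg _)

section StdSimplex

variable {ι : Type*} [Fintype ι] {p : ι → ℝ}

theorem sq_le_of_mem_stdSimplex (hp : p ∈ stdSimplex ℝ ι) (a : ι) : p a ^ 2 ≤ p a := by
  obtain ⟨h0, h1⟩ := mem_Icc_of_mem_stdSimplex hp a
  simpa only [sq] using mul_le_of_le_one_left h0 h1

theorem norm_toLp_le_one_of_mem_stdSimplex (hp : p ∈ stdSimplex ℝ ι) : ‖toLp 2 p‖ ≤ 1 := by
  refine le_of_sq_le_sq ?_ zero_le_one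
  rw [EuclideanSpace.real_norm_sq_eq, one_pow, ← hp.2]
  exact Finset.sum_le_sum fun a _ => sq_le_of_mem_stdSimplex hp a

theorem norm_le_one_of_mem_stdSimplex (hp : p ∈ stdSimplex ℝ ι) : ‖p‖ ≤ 1 := by
  simpa using stdSimplex_subset_closedBall hp

theorem abs_dotProduct_le_of_mem_stdSimplex (hp : p ∈ stdSimplex ℝ ι) (c : ι → ℝ) :
    |p ⬝ᵥ c| ≤ ‖c‖ :=
  calc |p ⬝ᵥ c| ≤ ∑ a, p a * ‖c‖ := by
        refine (Finset.abs_sum_le_sum_abs _ _).trans (Finset.sum_le_sum fun a _ => ?_)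
        rw [abs_mul, abs_of_nonneg (hp.1 a)]
        exact mul_le_mul_of_nonneg_left (norm_le_pi_norm c a) (hp.1 a)
    _ = ‖c‖ := by rw [← Finset.sum_mul, hp.2, one_mul]

end StdSimplex

section CategoricalCov

variable {ι : Type*} [DecidableEq ι]

def categoricalCov (p : ι → ℝ) : Matrix ι ι ℝ := diagonal p - vecMulVec p p

theorem transpose_categoricalCov (p : ι → ℝ) : (categoricalCov p)ᵀ = categoricalCov p := by
  simp [categoricalCov, transpose_vecMulVec]

variable [Fintype ι] {p q : ι → ℝ}

theorem categoricalCov_mulVec (p v : ι → ℝ) :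
    categoricalCov p *ᵥ v = p * v - (p ⬝ᵥ v) • p := by
  ext a
  simp [categoricalCov, sub_mulVec, mulVec_diagonal, vecMulVec_mulVec]

theorem norm_toLp_categoricalCov_mulVec_le_two_mul (hp : p ∈ stdSimplex ℝ ι) (v : ι → ℝ) :
    ‖toLp 2 (categoricalCov p *ᵥ v)‖ ≤ 2 * ‖toLp 2 v‖ := by
  have hpv : |p ⬝ᵥ v| ≤ ‖toLp 2 v‖ := by
    rw [dotProduct_comm, ← star_trivial p, ← EuclideanSpace.inner_toLp_toLp]
    exact (abs_real_inner_le_norm _ _).trans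
      (mul_le_of_le_one_left (norm_nonneg _) (norm_toLp_le_one_of_mem_stdSimplex hp))
  calc ‖toLp 2 (categoricalCov p *ᵥ v)‖
      ≤ ‖toLp 2 (p * v)‖ + |p ⬝ᵥ v| * ‖toLp 2 p‖ := by
        rw [categoricalCov_mulVec, toLp_sub, toLp_smul, ← Real.norm_eq_abs, ← norm_smul]
        exact norm_sub_le _ _
    _ ≤ 1 * ‖toLp 2 v‖ + ‖toLp 2 v‖ * 1 := by
        gcongr
        · exact (norm_toLp_mul_le p v).trans
            (mul_le_mul_of_nonneg_right (norm_le_one_of_mem_stdSimplex hp) (norm_nonneg _))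
        · exact norm_toLp_le_one_of_mem_stdSimplex hp
    _ = 2 * ‖toLp 2 v‖ := by ring

theorem norm_toEuclideanCLM_categoricalCov_le (hp : p ∈ stdSimplex ℝ ι) :
    ‖toEuclideanCLM (𝕜 := ℝ) (categoricalCov p)‖ ≤ 2 :=
  ContinuousLinearMap.opNorm_le_bound _ zero_le_two fun v =>
    norm_toLp_categoricalCov_mulVec_le_two_mul hp v.ofLp

theorem norm_toLp_categoricalCov_mulVec_le_norm (hp : p ∈ stdSimplex ℝ ι) (c : ι → ℝ) :
    ‖toLp 2 (categoricalCov p *ᵥ c)‖ ≤ ‖c‖ := by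
  set m := p ⬝ᵥ c
  have hvar : ∑ a, p a * (c a - m) ^ 2 = p ⬝ᵥ (c * c) - m ^ 2 := by
    have hsum : ∑ a, p a * (c a - m) ^ 2 =
        ∑ a, p a * (c a * c a) - 2 * m * ∑ a, p a * c a + m ^ 2 * ∑ a, p a := by
      simp only [Finset.mul_sum, ← Finset.sum_sub_distrib, ← Finset.sum_add_distrib]
      exact Finset.sum_congr rfl fun a _ => by ring
    rw [hsum, hp.2]
    simp only [dotProduct, Pi.mul_apply, m]
    ring
  have hsq : p ⬝ᵥ (c * c) ≤ ‖c‖ ^ 2 :=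
    (le_abs_self _).trans ((abs_dotProduct_le_of_mem_stdSimplex hp _).trans
      (by simpa [sq] using norm_mul_le c c))
  refine le_of_sq_le_sq ?_ (norm_nonneg _)
  calc ‖toLp 2 (categoricalCov p *ᵥ c)‖ ^ 2 = ∑ a, p a ^ 2 * (c a - m) ^ 2 := by
        simp only [EuclideanSpace.real_norm_sq_eq, categoricalCov_mulVec, Pi.sub_apply,
          Pi.mul_apply, Pi.smul_apply, smul_eq_mul]
        exact Finset.sum_congr rfl fun a _ => by ring
    _ ≤ ∑ a, p a * (c a - m) ^ 2 := Finset.sum_le_sum fun a _ =>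
        mul_le_mul_of_nonneg_right (sq_le_of_mem_stdSimplex hp a) (sq_nonneg _)
    _ = p ⬝ᵥ (c * c) - m ^ 2 := hvar
    _ ≤ ‖c‖ ^ 2 := by linarith [sq_nonneg m]

theorem norm_toLp_categoricalCov_mulVec_sub_le (hp : p ∈ stdSimplex ℝ ι)
    (hq : q ∈ stdSimplex ℝ ι) (c : ι → ℝ) :
    ‖toLp 2 (categoricalCov p *ᵥ c) - toLp 2 (categoricalCov q *ᵥ c)‖ ≤
      2 * ‖c‖ * ‖toLp 2 p - toLp 2 q‖ + |p ⬝ᵥ c - q ⬝ᵥ c| := by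
  have hdecomp : toLp 2 (categoricalCov p *ᵥ c) - toLp 2 (categoricalCov q *ᵥ c) =
      toLp 2 ((p - q) * c) - (p ⬝ᵥ c) • toLp 2 (p - q) - (p ⬝ᵥ c - q ⬝ᵥ c) • toLp 2 q := by
    ext a
    simp only [categoricalCov_mulVec, PiLp.sub_apply, PiLp.smul_apply, Pi.sub_apply,
      Pi.mul_apply, Pi.smul_apply, smul_eq_mul]
    ring
  have hpq : ‖toLp 2 ((p - q) * c)‖ ≤ ‖c‖ * ‖toLp 2 p - toLp 2 q‖ := by
    rw [mul_comm (p - q), ← toLp_sub]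
    exact norm_toLp_mul_le c (p - q)
  rw [hdecomp, toLp_sub]
  calc _ ≤ ‖toLp 2 ((p - q) * c)‖ + ‖(p ⬝ᵥ c) • (toLp 2 p - toLp 2 q)‖ +
        ‖(p ⬝ᵥ c - q ⬝ᵥ c) • toLp 2 q‖ :=
        (norm_sub_le _ _).trans (by gcongr; exact norm_sub_le _ _)
    _ = ‖toLp 2 ((p - q) * c)‖ + |p ⬝ᵥ c| * ‖toLp 2 p - toLp 2 q‖ +
        |p ⬝ᵥ c - q ⬝ᵥ c| * ‖toLp 2 q‖ := by
        simp only [norm_smul, Real.norm_eq_abs]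
    _ ≤ ‖c‖ * ‖toLp 2 p - toLp 2 q‖ + ‖c‖ * ‖toLp 2 p - toLp 2 q‖ +
        |p ⬝ᵥ c - q ⬝ᵥ c| * 1 := by
        gcongr
        · exact abs_dotProduct_le_of_mem_stdSimplex hp c
        · exact norm_toLp_le_one_of_mem_stdSimplex hq
    _ = _ := by ring

end CategoricalCov

section Softmax

open Real

variable {A : Type*} [Fintype A]

noncomputable def softmax (θ : EuclideanSpace ℝ A) : A → ℝ :=
  fun a => exp (θ a) / ∑ a', exp (θ a')

variable [Nonempty A]

theorem sum_exp_pos (θ : EuclideanSpace ℝ A) : 0 < ∑ a, exp (θ a) :=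
  Finset.sum_pos (fun _ _ => exp_pos _) Finset.univ_nonempty

theorem softmax_mem_stdSimplex (θ : EuclideanSpace ℝ A) : softmax θ ∈ stdSimplex ℝ A :=
  ⟨fun a => div_nonneg (exp_pos _).le (sum_exp_pos θ).le, by
    simp only [softmax, ← Finset.sum_div, div_self (sum_exp_pos θ).ne']⟩

variable [DecidableEq A]

theorem hasFDerivAt_softmax (θ : EuclideanSpace ℝ A) :
    HasFDerivAt (fun ϑ => toLp 2 (softmax ϑ))
      (toEuclideanCLM (𝕜 := ℝ) (categoricalCov (softmax θ))) θ := by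
  rw [← hasFDerivWithinAt_univ, hasFDerivWithinAt_piLp]
  intro a
  rw [hasFDerivWithinAt_univ]
  have hexp : ∀ b, HasFDerivAt (fun ϑ : EuclideanSpace ℝ A => exp (ϑ b))
      (exp (θ b) • PiLp.proj 2 (fun _ => ℝ) b) θ := fun b =>
    (PiLp.hasFDerivAt_apply 2 θ b).exp
  have hZ := HasFDerivAt.fun_sum (u := Finset.univ) fun b _ => hexp b
  have h := (hexp a).mul ((hasDerivAt_inv (sum_exp_pos θ).ne').comp_hasFDerivAt θ hZ)
  show HasFDerivAt (fun ϑ => exp (ϑ a) / ∑ b, exp (ϑ b)) _ θ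
  simp only [div_eq_mul_inv]
  refine h.congr_fderiv ?_
  ext v
  simp only [Function.comp_apply, _root_.add_apply, _root_.smul_apply, _root_.neg_apply,
    _root_.sum_apply, ContinuousLinearMap.comp_apply, neg_smul, smul_eq_mul, PiLp.proj_apply,
    ofLp_toEuclideanCLM, categoricalCov_mulVec, softmax, dotProduct, div_mul_eq_mul_div, ← Finset.sum_div, Pi.sub_apply, Pi.mul_apply, Pi.smul_apply]
  field_simp
  ring

theorem hasGradientAt_softmax_dotProduct (c : A → ℝ) (θ : EuclideanSpace ℝ A) :
    HasGradientAt (fun ϑ => softmax ϑ ⬝ᵥ c) (toLp 2 (categoricalCov (softmax θ) *ᵥ c)) θ := by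
  rw [hasGradientAt_iff_hasFDerivAt]
  have h := (innerSL ℝ (toLp 2 c)).hasFDerivAt.comp θ (hasFDerivAt_softmax θ)
  refine h.congr_fderiv ?_
  ext v
  simp only [ContinuousLinearMap.comp_apply, innerSL_apply_apply, ofLp_toEuclideanCLM,
    InnerProductSpace.toDual_apply_apply, EuclideanSpace.inner_eq_star_dotProduct, star_trivial]
  rw [dotProduct_mulVec, ← mulVec_transpose, transpose_categoricalCov, dotProduct_comm]

theorem lipschitzWith_softmax :
    LipschitzWith 2 fun θ : EuclideanSpace ℝ A => toLp 2 (softmax θ) :=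
  lipschitzWith_of_nnnorm_fderiv_le (fun θ => (hasFDerivAt_softmax θ).differentiableAt) fun θ => by
    rw [(hasFDerivAt_softmax θ).fderiv, ← NNReal.coe_le_coe]
    exact norm_toEuclideanCLM_categoricalCov_le (softmax_mem_stdSimplex θ)

theorem lipschitzWith_softmax_dotProduct (c : A → ℝ) :
    LipschitzWith ‖c‖₊ fun θ : EuclideanSpace ℝ A => softmax θ ⬝ᵥ c :=
  lipschitzWith_of_nnnorm_fderiv_le
    (fun θ => (hasGradientAt_softmax_dotProduct c θ).differentiableAt) fun θ => by
    rw [(hasGradientAt_iff_hasFDerivAt.1 (hasGradientAt_softmax_dotProduct c θ)).fderiv,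
      LinearIsometryEquiv.nnnorm_map, ← NNReal.coe_le_coe]
    exact norm_toLp_categoricalCov_mulVec_le_norm (softmax_mem_stdSimplex θ) c

end Softmax

/-- **Smoothness of linear functionals of the softmax.** For a finite set `A` and
`c ∈ ℝ^A`, the function `F(θ) = ∑_a softmax(θ)_a c_a` has `5‖c‖_∞`-Lipschitz
gradient in the Euclidean norm. -/
theorem softmax_linear_functional_smooth (A : Type) [Fintype A] (c : A → ℝ) :
    ∀ θ θ' : EuclideanSpace ℝ A,
      ‖gradient (fun ϑ : EuclideanSpace ℝ A =>
            ∑ a, Real.exp (ϑ a) / (∑ a', Real.exp (ϑ a')) * c a) θ -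
          gradient (fun ϑ : EuclideanSpace ℝ A =>
            ∑ a, Real.exp (ϑ a) / (∑ a', Real.exp (ϑ a')) * c a) θ'‖ ≤
        5 * (⨆ a, |c a|) * ‖θ - θ'‖ := by
  intro θ θ'
  rcases isEmpty_or_nonempty A with hA | hA
  · simp [Subsingleton.elim θ θ']
  classical
  have hF : (fun ϑ : EuclideanSpace ℝ A => ∑ a, Real.exp (ϑ a) / (∑ a', Real.exp (ϑ a')) * c a) =
      fun ϑ => softmax ϑ ⬝ᵥ c := rfl
  have hc : ⨆ a, |c a| = ‖c‖ := by
    rw [← PiLp.norm_toLp, PiLp.norm_eq_ciSup]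
    rfl
  rw [hF, (hasGradientAt_softmax_dotProduct c θ).gradient,
    (hasGradientAt_softmax_dotProduct c θ').gradient, hc]
  calc _ ≤ 2 * ‖c‖ * ‖toLp 2 (softmax θ) - toLp 2 (softmax θ')‖ +
        |softmax θ ⬝ᵥ c - softmax θ' ⬝ᵥ c| :=
        norm_toLp_categoricalCov_mulVec_sub_le (softmax_mem_stdSimplex θ)
          (softmax_mem_stdSimplex θ') c
    _ ≤ 2 * ‖c‖ * (2 * ‖θ - θ'‖) + ‖c‖ * ‖θ - θ'‖ := by
        gcongr
        · exact lipschitzWith_softmax.norm_sub_le θ θ'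
        · exact (lipschitzWith_softmax_dotProduct c).norm_sub_le θ θ'
    _ = 5 * ‖c‖ * ‖θ - θ'‖ := by ring
end

section
/- (Second-derivative bound along a direction for a smoothly parameterized policy) Consider a finite discounted MDP, a fixed state s₀, a parameterized family of stochastic policies θ ↦ π_θ (θ ∈ ℝ^d) and a unit vector u ∈ ℝ^d; set π_α := π_{θ+αu} and Ṽ(α) := V^{π_α}(s₀), assuming α ↦ π_α(a|s) is twice differentiable for all s,a. If for every state s: Σ_{a∈A} |d π_α(a|s)/dα|_{α=0}| ≤ C₁ and Σ_{a∈A} |d² π_α(a|s)/dα²|_{α=0}| ≤ C₂, then |d² Ṽ(α)/dα²|_{α=0}| ≤ C₂/(1−γ)² + 2γC₁²/(1−γ)³. -/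
open scoped BigOperators InnerProductSpace

/-- A finite Markov decision process (the data only: transition probabilities `P`,
rewards `r`, and discount factor `γ`). -/
structure FinMDP where
  S : Type
  A : Type
  [fS : Fintype S]
  [dS : DecidableEq S]
  [fA : Fintype A]
  [dA : DecidableEq A]
  P : S → A → S → ℝ
  r : S → A → ℝ
  γ : ℝ

attribute [instance] FinMDP.fS FinMDP.dS FinMDP.fA FinMDP.dA

/-- `μ` is a probability distribution on the finite type `X`. -/
def IsDist {X : Type*} [Fintype X] (μ : X → ℝ) : Prop :=
  (∀ x, 0 ≤ μ x) ∧ ∑ x, μ x = 1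

namespace FinMDP

variable (M : FinMDP)

/-- The MDP data is well formed: `P` is a transition kernel, rewards lie in `[0,1]`,
and `γ ∈ [0,1)`. -/
def Valid : Prop :=
  (∀ s a s', 0 ≤ M.P s a s') ∧ (∀ s a, ∑ s', M.P s a s' = 1) ∧
    (∀ s a, 0 ≤ M.r s a ∧ M.r s a ≤ 1) ∧ 0 ≤ M.γ ∧ M.γ < 1

/-- `π` is a stochastic policy: `π s a` is the probability `π(a|s)`. -/
def IsPolicy (π : M.S → M.A → ℝ) : Prop :=
  (∀ s a, 0 ≤ π s a) ∧ ∀ s, ∑ a, π s a = 1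

/-- State-to-state transition matrix induced by a policy. -/
noncomputable def Pmat (π : M.S → M.A → ℝ) : Matrix M.S M.S ℝ :=
  Matrix.of fun s s' => ∑ a, π s a * M.P s a s'

/-- Expected one-step reward under a policy. -/
noncomputable def rPol (π : M.S → M.A → ℝ) (s : M.S) : ℝ :=
  ∑ a, π s a * M.r s a

/-- The value function `V^π(s₀) = E[∑ₜ γ^t r(s_t, a_t)]`. -/
noncomputable def V (π : M.S → M.A → ℝ) (s₀ : M.S) : ℝ :=
  ∑' t : ℕ, M.γ ^ t * ((M.Pmat π ^ t).mulVec (M.rPol π)) s₀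

/-- `V^π(ρ)` for a starting state distribution `ρ`. -/
noncomputable def Vd (π : M.S → M.A → ℝ) (ρ : M.S → ℝ) : ℝ :=
  ∑ s, ρ s * M.V π s

/-- The action-value function `Q^π(s,a)`. -/
noncomputable def Qf (π : M.S → M.A → ℝ) (s : M.S) (a : M.A) : ℝ :=
  M.r s a + M.γ * ∑ s', M.P s a s' * M.V π s'

/-- The advantage function `A^π(s,a) = Q^π(s,a) - V^π(s)`. -/
noncomputable def Adv (π : M.S → M.A → ℝ) (s : M.S) (a : M.A) : ℝ :=
  M.Qf π s a - M.V π s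

/-- Discounted state visitation distribution `d^π_{s₀}(s)`. -/
noncomputable def dvisit (π : M.S → M.A → ℝ) (s₀ s : M.S) : ℝ :=
  (1 - M.γ) * ∑' t : ℕ, M.γ ^ t * (M.Pmat π ^ t) s₀ s

/-- Discounted state visitation distribution `d^π_μ(s)` for a starting distribution `μ`. -/
noncomputable def dvisitD (π : M.S → M.A → ℝ) (μ : M.S → ℝ) (s : M.S) : ℝ :=
  ∑ s₀, μ s₀ * M.dvisit π s₀ s

/-- State-action transition matrix induced by a policy. -/
noncomputable def PmatSA (π : M.S → M.A → ℝ) :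
    Matrix (M.S × M.A) (M.S × M.A) ℝ :=
  Matrix.of fun p q => M.P p.1 p.2 q.1 * π q.1 q.2

/-- Discounted state-action visitation measure `d^π_ν(s,a)` started from `(s₀,a₀) ∼ ν`,
executing `a₀` first and following `π` thereafter. -/
noncomputable def dvisitSA (π : M.S → M.A → ℝ) (ν : M.S × M.A → ℝ)
    (p : M.S × M.A) : ℝ :=
  (1 - M.γ) * ∑' t : ℕ, M.γ ^ t * ∑ p₀, ν p₀ * (M.PmatSA π ^ t) p₀ p

/-- The softmax policy `π_θ(a|s) = exp(θ_{s,a}) / ∑_{a'} exp(θ_{s,a'})`. -/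
noncomputable def softmaxPolicy (θ : EuclideanSpace ℝ (M.S × M.A)) :
    M.S → M.A → ℝ :=
  fun s a => Real.exp (θ (s, a)) / ∑ a', Real.exp (θ (s, a'))

end FinMDP

/-!
By the Neumann series, `V^π(s₀) = (G r)(s₀)` for the resolvent `G = (1 - γ P^π)⁻¹` of the state
transition matrix and the expected reward `r = rPol π`. Both `P^π` and `r` are linear in `π`, so
along the curve `π_α` their derivatives are built in the same way from the derivatives of `π_α`.
In the ℓ∞ operator norm (maximal absolute row sum) these have norm at most `C₁` and `C₂`, while
`‖G‖ ≤ 1/(1-γ)` and `G' = G (γ P') G`. Expanding `(G r)''` by the product rule and bounding each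
factor gives the estimate; the constants combine because `γ + (1 - γ) = 1`.
-/

namespace Matrix

attribute [local instance] Matrix.linftyOpNormedRing Matrix.linftyOpNormedAlgebra

variable {n : Type*} [Fintype n] [DecidableEq n]

theorem linfty_opNorm_le_of_sum_abs_le {A : Matrix n n ℝ} {c : ℝ} (hc : 0 ≤ c)
    (h : ∀ i, ∑ j, |A i j| ≤ c) : ‖A‖ ≤ c := by
  change ‖fun i => WithLp.toLp 1 (A i)‖ ≤ c
  refine (pi_norm_le_iff_of_nonneg hc).mpr fun i => ?_
  simpa [PiLp.norm_eq_of_L1] using h i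

theorem abs_mulVec_apply_le {A : Matrix n n ℝ} {v : n → ℝ} {a b : ℝ} (hA : ‖A‖ ≤ a)
    (hv : ‖v‖ ≤ b) (i : n) : |(A *ᵥ v) i| ≤ a * b :=
  calc |(A *ᵥ v) i| ≤ ‖A‖ * ‖v‖ := (norm_le_pi_norm (A *ᵥ v) i).trans (linfty_opNorm_mulVec A v)
    _ ≤ a * b := mul_le_mul hA hv (norm_nonneg v) ((norm_nonneg A).trans hA)

theorem hasDerivAt_iff_entrywise {f : ℝ → Matrix n n ℝ} {f' : Matrix n n ℝ} {x : ℝ} :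
    HasDerivAt f f' x ↔ ∀ i j, HasDerivAt (fun α => f α i j) (f' i j) x := by
  refine ⟨fun h i j =>
    (entryLinearMap ℝ ℝ i j).toContinuousLinearMap.hasFDerivAt.comp_hasDerivAt x h, fun h => ?_⟩
  have hsum : ∀ g : Matrix n n ℝ, g = ∑ i, ∑ j, g i j • single i j (1 : ℝ) := fun g => by
    conv_lhs => rw [matrix_eq_sum_single g]
    simp [smul_single]
  rw [funext fun α => hsum (f α), hsum f']
  exact HasDerivAt.fun_sum fun i _ => HasDerivAt.fun_sum fun j _ => (h i j).smul_const _

theorem hasDerivAt_mulVec_apply {G : ℝ → Matrix n n ℝ} {G' : Matrix n n ℝ} {v : ℝ → n → ℝ}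
    {v' : n → ℝ} {x : ℝ} (hG : HasDerivAt G G' x) (hv : HasDerivAt v v' x) (i : n) :
    HasDerivAt (fun α => (G α *ᵥ v α) i) ((G' *ᵥ v x) i + (G x *ᵥ v') i) x := by
  simp only [mulVec, dotProduct, ← Finset.sum_add_distrib]
  exact HasDerivAt.fun_sum fun j _ =>
    (hasDerivAt_iff_entrywise.mp hG i j).mul (hasDerivAt_pi.mp hv j)

end Matrix

section Resolvent

variable {R : Type*} [NormedRing R]

theorem norm_resolvent_second_deriv_le {G A₁ A₂ : R} {κ a₁ a₂ : ℝ} (hG : ‖G‖ ≤ κ)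
    (hA₁ : ‖A₁‖ ≤ a₁) (hA₂ : ‖A₂‖ ≤ a₂) :
    ‖(G * A₁ * G * A₁ + G * A₂) * G + G * A₁ * (G * A₁ * G)‖ ≤
      2 * κ ^ 3 * a₁ ^ 2 + κ ^ 2 * a₂ := by
  have hG₁ : ‖G * A₁ * G‖ ≤ κ * a₁ * κ := norm_mul_le_of_le (norm_mul_le_of_le hG hA₁) hG
  calc _ ≤ (κ * a₁ * κ * a₁ + κ * a₂) * κ + κ * a₁ * (κ * a₁ * κ) :=
        (norm_add_le _ _).trans <| add_le_add
          (norm_mul_le_of_le ((norm_add_le _ _).trans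
            (add_le_add (norm_mul_le_of_le hG₁ hA₁) (norm_mul_le_of_le hG hA₂))) hG)
          (norm_mul_le_of_le (norm_mul_le_of_le hG hA₁) hG₁)
    _ = 2 * κ ^ 3 * a₁ ^ 2 + κ ^ 2 * a₂ := by ring

variable [HasSummableGeomSeries R]

theorem norm_inverse_one_sub_le [NormOneClass R] {x : R} {q : ℝ} (hx : ‖x‖ ≤ q) (hq : q < 1) :
    ‖Ring.inverse (1 - x)‖ ≤ (1 - q)⁻¹ := by
  have hx1 : ‖x‖ < 1 := hx.trans_lt hq
  rw [← geom_series_eq_inverse x hx1]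
  calc _ ≤ ‖(1 : R)‖ - 1 + (1 - ‖x‖)⁻¹ := tsum_geometric_le_of_norm_lt_one x hx1
    _ ≤ (1 - q)⁻¹ := by
      rw [norm_one, sub_self, zero_add]
      gcongr

theorem HasDerivAt.inverse_one_sub {𝕜 : Type*} [NontriviallyNormedField 𝕜] [NormedAlgebra 𝕜 R]
    {A : 𝕜 → R} {A' : R} {x : 𝕜} (hA : HasDerivAt A A' x) (hx : ‖A x‖ < 1) :
    HasDerivAt (fun α => Ring.inverse (1 - A α))
      (Ring.inverse (1 - A x) * A' * Ring.inverse (1 - A x)) x := by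
  have h := (hasFDerivAt_ringInverse (𝕜 := 𝕜) (Units.oneSub (A x) hx)).comp_hasDerivAt x
    (hA.const_sub 1)
  rw [← Ring.inverse_unit] at h
  simpa [Function.comp_def] using h

end Resolvent

namespace FinMDP

attribute [local instance] Matrix.linftyOpNormedRing Matrix.linftyOpNormedAlgebra

open Matrix

noncomputable def resolvent (M : FinMDP) (π : M.S → M.A → ℝ) : Matrix M.S M.S ℝ :=
  Ring.inverse (1 - M.γ • M.Pmat π)

variable {M : FinMDP}

theorem hasDerivAt_Pmat {p : ℝ → M.S → M.A → ℝ} {q : M.S → M.A → ℝ} {x : ℝ}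
    (h : ∀ s a, HasDerivAt (fun α => p α s a) (q s a) x) :
    HasDerivAt (fun α => M.Pmat (p α)) (M.Pmat q) x :=
  hasDerivAt_iff_entrywise.mpr fun s _ => HasDerivAt.fun_sum fun a _ => (h s a).mul_const _

theorem hasDerivAt_rPol {p : ℝ → M.S → M.A → ℝ} {q : M.S → M.A → ℝ} {x : ℝ}
    (h : ∀ s a, HasDerivAt (fun α => p α s a) (q s a) x) :
    HasDerivAt (fun α => M.rPol (p α)) (M.rPol q) x :=
  hasDerivAt_pi.mpr fun s => HasDerivAt.fun_sum fun a _ => (h s a).mul_const _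

theorem norm_smul_Pmat_le (hM : M.Valid) {f : M.S → M.A → ℝ} {C : ℝ} (hC : 0 ≤ C)
    (hf : ∀ s, ∑ a, |f s a| ≤ C) : ‖M.γ • M.Pmat f‖ ≤ M.γ * C := by
  rw [norm_smul, Real.norm_of_nonneg hM.2.2.2.1]
  refine mul_le_mul_of_nonneg_left (linfty_opNorm_le_of_sum_abs_le hC fun s => ?_) hM.2.2.2.1
  calc ∑ s', |M.Pmat f s s'| ≤ ∑ s', ∑ a, |f s a| * M.P s a s' := by
        gcongr
        refine (Finset.abs_sum_le_sum_abs _ _).trans_eq ?_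
        simp [abs_mul, abs_of_nonneg (hM.1 _ _ _)]
    _ = ∑ a, |f s a| := by
        rw [Finset.sum_comm]
        simp [← Finset.mul_sum, hM.2.1]
    _ ≤ C := hf s

theorem norm_rPol_le (hM : M.Valid) {f : M.S → M.A → ℝ} {C : ℝ} (hC : 0 ≤ C)
    (hf : ∀ s, ∑ a, |f s a| ≤ C) : ‖M.rPol f‖ ≤ C := by
  refine (pi_norm_le_iff_of_nonneg hC).mpr fun s => ?_
  calc ‖M.rPol f s‖ ≤ ∑ a, |f s a| * |M.r s a| := by
        rw [Real.norm_eq_abs]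
        refine (Finset.abs_sum_le_sum_abs _ _).trans_eq ?_
        simp [abs_mul]
    _ ≤ ∑ a, |f s a| := by
        gcongr with a
        exact mul_le_of_le_one_right (abs_nonneg _)
          (abs_le.mpr ⟨by linarith [(hM.2.2.1 s a).1], (hM.2.2.1 s a).2⟩)
    _ ≤ C := hf s

theorem IsPolicy.sum_abs {π : M.S → M.A → ℝ} (hπ : M.IsPolicy π) (s : M.S) :
    ∑ a, |π s a| = 1 := by
  simp [abs_of_nonneg (hπ.1 s _), hπ.2 s]

theorem IsPolicy.norm_smul_Pmat_le (hM : M.Valid) {π : M.S → M.A → ℝ} (hπ : M.IsPolicy π) :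
    ‖M.γ • M.Pmat π‖ ≤ M.γ := by
  simpa using FinMDP.norm_smul_Pmat_le hM zero_le_one fun s => (hπ.sum_abs s).le

theorem norm_resolvent_le (hM : M.Valid) [Nonempty M.S] {π : M.S → M.A → ℝ}
    (hπ : M.IsPolicy π) : ‖M.resolvent π‖ ≤ (1 - M.γ)⁻¹ :=
  norm_inverse_one_sub_le (hπ.norm_smul_Pmat_le hM) hM.2.2.2.2

theorem V_eq_resolvent_mulVec (hM : M.Valid) {π : M.S → M.A → ℝ} (hπ : M.IsPolicy π)
    (s₀ : M.S) : M.V π s₀ = (M.resolvent π *ᵥ M.rPol π) s₀ := by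
  let L : Matrix M.S M.S ℝ →L[ℝ] ℝ :=
    (LinearMap.proj s₀ ∘ₗ (mulVecBilin ℝ ℝ).flip (M.rPol π)).toContinuousLinearMap
  have h := (hasSum_geom_series_inverse _
    ((hπ.norm_smul_Pmat_le hM).trans_lt hM.2.2.2.2)).mapL L
  calc M.V π s₀ = ∑' t : ℕ, L ((M.γ • M.Pmat π) ^ t) :=
        tsum_congr fun t => by simp [L, smul_pow]
    _ = _ := h.tsum_eq

theorem hasDerivAt_resolvent (hM : M.Valid) {p : ℝ → M.S → M.A → ℝ} {q : M.S → M.A → ℝ}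
    {x : ℝ} (hp : M.IsPolicy (p x)) (h : ∀ s a, HasDerivAt (fun α => p α s a) (q s a) x) :
    HasDerivAt (fun α => M.resolvent (p α))
      (M.resolvent (p x) * (M.γ • M.Pmat q) * M.resolvent (p x)) x :=
  ((hasDerivAt_Pmat h).fun_const_smul M.γ).inverse_one_sub
    ((hp.norm_smul_Pmat_le hM).trans_lt hM.2.2.2.2)

theorem hasDerivAt_V (hM : M.Valid) {p : ℝ → M.S → M.A → ℝ} {q : M.S → M.A → ℝ} {x : ℝ}
    (hp : ∀ α, M.IsPolicy (p α)) (h : ∀ s a, HasDerivAt (fun α => p α s a) (q s a) x)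
    (s₀ : M.S) :
    HasDerivAt (fun α => M.V (p α) s₀)
      (((M.resolvent (p x) * (M.γ • M.Pmat q) * M.resolvent (p x)) *ᵥ M.rPol (p x)) s₀ +
        (M.resolvent (p x) *ᵥ M.rPol q) s₀) x := by
  simpa only [V_eq_resolvent_mulVec hM (hp _)] using
    hasDerivAt_mulVec_apply (hasDerivAt_resolvent hM (hp x) h) (hasDerivAt_rPol h) s₀

theorem abs_deriv_deriv_V_le (hM : M.Valid) {p p₁ : ℝ → M.S → M.A → ℝ}
    {p₂ : M.S → M.A → ℝ} {x : ℝ} (hp : ∀ α, M.IsPolicy (p α))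
    (h₁ : ∀ α s a, HasDerivAt (fun β => p β s a) (p₁ α s a) α)
    (h₂ : ∀ s a, HasDerivAt (fun β => p₁ β s a) (p₂ s a) x) {C₁ C₂ : ℝ}
    (hC₁ : ∀ s, ∑ a, |p₁ x s a| ≤ C₁) (hC₂ : ∀ s, ∑ a, |p₂ s a| ≤ C₂) (s₀ : M.S) :
    |deriv (deriv fun α => M.V (p α) s₀) x| ≤
      C₂ / (1 - M.γ) ^ 2 + 2 * M.γ * C₁ ^ 2 / (1 - M.γ) ^ 3 := by
  have : Nonempty M.S := ⟨s₀⟩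
  have hG := hasDerivAt_resolvent hM (hp x) (h₁ x)
  have hV' := (hasDerivAt_mulVec_apply ((hG.fun_mul
      ((hasDerivAt_Pmat h₂).fun_const_smul M.γ)).fun_mul hG) (hasDerivAt_rPol (h₁ x)) s₀).fun_add
    (hasDerivAt_mulVec_apply hG (hasDerivAt_rPol h₂) s₀)
  rw [funext fun α => (hasDerivAt_V hM hp (h₁ α) s₀).deriv, hV'.deriv]
  have hC₁₀ : 0 ≤ C₁ := (Finset.sum_nonneg fun a _ => abs_nonneg _).trans (hC₁ s₀)
  have hC₂₀ : 0 ≤ C₂ := (Finset.sum_nonneg fun a _ => abs_nonneg _).trans (hC₂ s₀)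
  have hκ := norm_resolvent_le hM (hp x)
  have hA₁ := norm_smul_Pmat_le hM hC₁₀ hC₁
  have hG₁ : ‖M.resolvent (p x) * (M.γ • M.Pmat (p₁ x)) * M.resolvent (p x)‖ ≤
      (1 - M.γ)⁻¹ * (M.γ * C₁) * (1 - M.γ)⁻¹ :=
    norm_mul_le_of_le (norm_mul_le_of_le hκ hA₁) hκ
  have e₀ := abs_mulVec_apply_le
    (norm_resolvent_second_deriv_le hκ hA₁ (norm_smul_Pmat_le hM hC₂₀ hC₂))
    (norm_rPol_le hM zero_le_one fun s => ((hp x).sum_abs s).le) s₀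
  have e₁ := abs_mulVec_apply_le hG₁ (norm_rPol_le hM hC₁₀ hC₁) s₀
  have e₂ := abs_mulVec_apply_le hκ (norm_rPol_le hM hC₂₀ hC₂) s₀
  calc _ ≤ _ := (abs_add_le _ _).trans (add_le_add (abs_add_le _ _) (abs_add_le _ _))
    _ ≤ _ := add_le_add (add_le_add e₀ e₁) (add_le_add e₁ e₂)
    _ = C₂ / (1 - M.γ) ^ 2 + 2 * M.γ * C₁ ^ 2 / (1 - M.γ) ^ 3 := by
      have : 1 - M.γ ≠ 0 := by linarith [hM.2.2.2.2]
      field_simp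
      ring

end FinMDP

theorem second_derivative_bound_along_direction_general (M : FinMDP) (hM : M.Valid)
    (s₀ : M.S) (d : ℕ)
    (π : EuclideanSpace ℝ (Fin d) → M.S → M.A → ℝ)
    (hpolicy : ∀ ϑ, M.IsPolicy (π ϑ))
    (θ u : EuclideanSpace ℝ (Fin d))
    (hdiff : ∀ s a, Differentiable ℝ (fun α : ℝ => π (θ + α • u) s a))
    (hdiff2 : ∀ s a, Differentiable ℝ (deriv (fun α : ℝ => π (θ + α • u) s a)))
    (C₁ C₂ : ℝ)
    (hC₁ : ∀ s, ∑ a, |deriv (fun α : ℝ => π (θ + α • u) s a) 0| ≤ C₁)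
    (hC₂ : ∀ s, ∑ a, |deriv (deriv (fun α : ℝ => π (θ + α • u) s a)) 0| ≤ C₂) :
    |deriv (deriv (fun α : ℝ => M.V (π (θ + α • u)) s₀)) 0| ≤
      C₂ / (1 - M.γ) ^ 2 + 2 * M.γ * C₁ ^ 2 / (1 - M.γ) ^ 3 :=
  FinMDP.abs_deriv_deriv_V_le hM (fun _ => hpolicy _)
    (p₁ := fun α s a => deriv (fun β : ℝ => π (θ + β • u) s a) α)
    (p₂ := fun s a => deriv (deriv (fun α : ℝ => π (θ + α • u) s a)) 0)
    (fun α s a => (hdiff s a α).hasDerivAt) (fun s a => (hdiff2 s a 0).hasDerivAt) hC₁ hC₂ s₀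

/-- **Second-derivative bound along a direction for a smoothly parameterized policy.** -/
theorem second_derivative_bound_along_direction (M : FinMDP) (hM : M.Valid)
    (s₀ : M.S) (d : ℕ)
    (π : EuclideanSpace ℝ (Fin d) → M.S → M.A → ℝ)
    (hpolicy : ∀ ϑ, M.IsPolicy (π ϑ))
    (θ u : EuclideanSpace ℝ (Fin d)) (hu : ‖u‖ = 1)
    (hdiff : ∀ s a, Differentiable ℝ (fun α : ℝ => π (θ + α • u) s a))
    (hdiff2 : ∀ s a, Differentiable ℝ (deriv (fun α : ℝ => π (θ + α • u) s a)))
    (C₁ C₂ : ℝ)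
    (hC₁ : ∀ s, ∑ a, |deriv (fun α : ℝ => π (θ + α • u) s a) 0| ≤ C₁)
    (hC₂ : ∀ s, ∑ a, |deriv (deriv (fun α : ℝ => π (θ + α • u) s a)) 0| ≤ C₂) :
    |deriv (deriv (fun α : ℝ => M.V (π (θ + α • u)) s₀)) 0| ≤
      C₂ / (1 - M.γ) ^ 2 + 2 * M.γ * C₁ ^ 2 / (1 - M.γ) ^ 3 :=
  second_derivative_bound_along_direction_general M hM s₀ d π hpolicy θ u hdiff hdiff2 C₁ C₂ hC₁ hC₂
end

section
/- (Smoothness of the value function under the direct parameterization) For every finite discounted MDP and every starting state s₀, the gradient map π ↦ ∇_π V^π(s₀), with entries [∇_π V^π(s₀)]_{s,a} = (1/(1−γ)) d^π_{s₀}(s) Q^π(s,a), is Lipschitz on Δ(A)^S with constant 2γ|A|/(1−γ)³: for all π, π′ ∈ Δ(A)^S, ‖∇_π V^π(s₀) − ∇_π V^{π′}(s₀)‖₂ ≤ (2γ|A|/(1−γ)³) ‖π − π′‖₂. -/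
open scoped BigOperators InnerProductSpace

/-!
By the product rule, the `(s, a)` entry of `∇V^π(s₀) - ∇V^π'(s₀)` is at most
`(|d^π(s) - d^π'(s)| ‖Q^π‖_∞ + d^π'(s) |Q^π(s,a) - Q^π'(s,a)|) / (1 - γ)`. Both differences are
controlled by `ε := max_s ‖π(·|s) - π'(·|s)‖₁ ≤ √|A| ‖π - π'‖₂` through the Bellman equations:
`V = r_π + γ P_π V` gives `‖V^π - V^π'‖_∞ ≤ ε / (1 - γ)²`, and `d = (1 - γ) e_{s₀} + γ d P_π`
gives `‖d^π - d^π'‖₁ ≤ γ ε / (1 - γ)`. Summing over `s` and returning to the Euclidean norm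
costs a second factor `√|A|`.
-/

open Finset Matrix

theorem abs_sum_mul_le_sum_abs_mul_norm {X : Type*} [Fintype X] (v f : X → ℝ) :
    |∑ x, v x * f x| ≤ (∑ x, |v x|) * ‖f‖ := by
  rw [sum_mul]
  refine (abs_sum_le_sum_abs _ _).trans (sum_le_sum fun x _ => ?_)
  rw [abs_mul, ← Real.norm_eq_abs (f x)]
  exact mul_le_mul_of_nonneg_left (norm_le_pi_norm f x) (abs_nonneg _)

theorem IsDist.sum_abs_eq_one {X : Type*} [Fintype X] {μ : X → ℝ} (hμ : IsDist μ) :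
    ∑ x, |μ x| = 1 := by
  simp only [abs_of_nonneg (hμ.1 _), hμ.2]

theorem IsDist.abs_sum_mul_le {X : Type*} [Fintype X] {μ : X → ℝ} (hμ : IsDist μ)
    (f : X → ℝ) : |∑ x, μ x * f x| ≤ ‖f‖ := by
  simpa only [hμ.sum_abs_eq_one, one_mul] using abs_sum_mul_le_sum_abs_mul_norm μ f

section RowSums

variable {m n : Type*} [Fintype m] [Fintype n]

theorem Matrix.norm_mulVec_le_of_sum_abs_le {A : Matrix m n ℝ} {ε : ℝ} (hε : 0 ≤ ε)
    (hA : ∀ i, ∑ j, |A i j| ≤ ε) (x : n → ℝ) : ‖A *ᵥ x‖ ≤ ε * ‖x‖ := by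
  refine (pi_norm_le_iff_of_nonneg (by positivity)).2 fun i => ?_
  rw [Real.norm_eq_abs]
  exact (abs_sum_mul_le_sum_abs_mul_norm _ _).trans (by gcongr; exact hA i)

theorem Matrix.sum_abs_vecMul_le_of_sum_abs_le {A : Matrix m n ℝ} {ε : ℝ}
    (hA : ∀ i, ∑ j, |A i j| ≤ ε) (v : m → ℝ) : ∑ j, |(v ᵥ* A) j| ≤ ε * ∑ i, |v i| := by
  calc ∑ j, |(v ᵥ* A) j| ≤ ∑ j, ∑ i, |v i| * |A i j| := by
        refine sum_le_sum fun j _ => (abs_sum_le_sum_abs _ _).trans_eq ?_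
        simp only [abs_mul]
    _ = ∑ i, |v i| * ∑ j, |A i j| := by rw [sum_comm]; simp only [mul_sum]
    _ ≤ ∑ i, |v i| * ε := sum_le_sum fun i _ => by gcongr; exact hA i
    _ = ε * ∑ i, |v i| := by rw [← sum_mul, mul_comm]

end RowSums

section Stochastic

variable {n : Type*} [Fintype n] [DecidableEq n] {P : Matrix n n ℝ}

theorem Matrix.sum_abs_row_of_mem_rowStochastic (hP : P ∈ rowStochastic ℝ n) (i : n) :
    ∑ j, |P i j| = 1 := by
  simp only [abs_of_nonneg (nonneg_of_mem_rowStochastic hP), sum_row_of_mem_rowStochastic hP]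

theorem Matrix.norm_mulVec_le_of_mem_rowStochastic (hP : P ∈ rowStochastic ℝ n)
    (x : n → ℝ) : ‖P *ᵥ x‖ ≤ ‖x‖ := by
  simpa using norm_mulVec_le_of_sum_abs_le zero_le_one
    (fun i => (sum_abs_row_of_mem_rowStochastic hP i).le) x

variable {γ : ℝ} (hγ₀ : 0 ≤ γ) (hγ₁ : γ < 1)
include hγ₀ hγ₁

theorem summable_geometric_mul_of_abs_le {f : ℕ → ℝ} {C : ℝ} (hf : ∀ t, |f t| ≤ C) :
    Summable fun t => γ ^ t * f t :=
  .of_norm_bounded ((summable_geometric_of_lt_one hγ₀ hγ₁).mul_right C) fun t => by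
    rw [Real.norm_eq_abs, abs_mul, abs_pow, abs_of_nonneg hγ₀]
    exact mul_le_mul_of_nonneg_left (hf t) (by positivity)

theorem Matrix.summable_discounted_mulVec (hP : P ∈ rowStochastic ℝ n) (r : n → ℝ) (i : n) :
    Summable fun t => γ ^ t * (P ^ t *ᵥ r) i :=
  summable_geometric_mul_of_abs_le hγ₀ hγ₁ fun t =>
    (norm_le_pi_norm _ i).trans (norm_mulVec_le_of_mem_rowStochastic (pow_mem hP t) r)

theorem Matrix.norm_discounted_mulVec_le (hP : P ∈ rowStochastic ℝ n) (r : n → ℝ) :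
    ‖fun i => ∑' t, γ ^ t * (P ^ t *ᵥ r) i‖ ≤ ‖r‖ / (1 - γ) := by
  refine (pi_norm_le_iff_of_nonneg (div_nonneg (norm_nonneg r) (by linarith))).2 fun i => ?_
  have hgeom := summable_geometric_of_lt_one hγ₀ hγ₁
  calc ‖∑' t, γ ^ t * (P ^ t *ᵥ r) i‖ ≤ ∑' t, γ ^ t * ‖r‖ := by
        refine tsum_of_norm_bounded (hgeom.mul_right _).hasSum fun t => ?_
        rw [norm_mul, norm_pow, Real.norm_of_nonneg hγ₀]
        gcongr
        exact (norm_le_pi_norm _ i).trans (norm_mulVec_le_of_mem_rowStochastic (pow_mem hP t) r)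
    _ = ‖r‖ / (1 - γ) := by
        rw [tsum_mul_right, tsum_geometric_of_lt_one hγ₀ hγ₁, inv_mul_eq_div]

theorem Matrix.discounted_mulVec_eq (hP : P ∈ rowStochastic ℝ n) (r : n → ℝ) :
    (fun i => ∑' t, γ ^ t * (P ^ t *ᵥ r) i) =
      r + γ • P *ᵥ fun i => ∑' t, γ ^ t * (P ^ t *ᵥ r) i := by
  have hsum := summable_discounted_mulVec hγ₀ hγ₁ hP r
  have hstep (t : ℕ) (i : n) : γ ^ (t + 1) * (P ^ (t + 1) *ᵥ r) i =
      γ * ∑ j, P i j * (γ ^ t * (P ^ t *ᵥ r) j) := by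
    rw [pow_succ' P, ← mulVec_mulVec, pow_succ', mulVec, dotProduct, mul_sum, mul_sum]
    exact sum_congr rfl fun j _ => by ring
  ext i
  rw [(hsum i).tsum_eq_zero_add, tsum_congr (hstep · i), tsum_mul_left,
    Summable.tsum_finsetSum fun j _ => (hsum j).mul_left _]
  simp only [pow_zero, one_mul, one_mulVec, Pi.add_apply, Pi.smul_apply, smul_eq_mul]
  simp only [mulVec, dotProduct, tsum_mul_left]

theorem Matrix.summable_discounted_apply (hP : P ∈ rowStochastic ℝ n) (i j : n) :
    Summable fun t => γ ^ t * (P ^ t) i j :=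
  summable_geometric_mul_of_abs_le hγ₀ hγ₁ (C := 1) fun t => by
    rw [abs_of_nonneg (nonneg_of_mem_rowStochastic (pow_mem hP t))]
    exact le_one_of_mem_rowStochastic (pow_mem hP t)

theorem Matrix.sum_discounted_apply (hP : P ∈ rowStochastic ℝ n) (i : n) :
    ∑ j, ∑' t, γ ^ t * (P ^ t) i j = (1 - γ)⁻¹ := by
  rw [← Summable.tsum_finsetSum fun j _ => summable_discounted_apply hγ₀ hγ₁ hP i j]
  simp only [← mul_sum, sum_row_of_mem_rowStochastic (pow_mem hP _), mul_one]
  exact tsum_geometric_of_lt_one hγ₀ hγ₁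

theorem Matrix.discounted_apply_eq (hP : P ∈ rowStochastic ℝ n) (i : n) :
    (fun j => ∑' t, γ ^ t * (P ^ t) i j) =
      Pi.single i 1 + γ • (fun j => ∑' t, γ ^ t * (P ^ t) i j) ᵥ* P := by
  have hsum := summable_discounted_apply hγ₀ hγ₁ hP i
  have hstep (t : ℕ) (j : n) : γ ^ (t + 1) * (P ^ (t + 1)) i j =
      γ * ∑ k, γ ^ t * (P ^ t) i k * P k j := by
    rw [pow_succ P, mul_apply, pow_succ', mul_sum, mul_sum]
    exact sum_congr rfl fun k _ => by ring
  ext j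
  rw [(hsum j).tsum_eq_zero_add, tsum_congr (hstep · j), tsum_mul_left,
    Summable.tsum_finsetSum fun k _ => (hsum k).mul_right _]
  simp only [pow_zero, one_mul, one_apply, Pi.add_apply, Pi.smul_apply, smul_eq_mul,
    vecMul, dotProduct, tsum_mul_right, Pi.single_apply, eq_comm]

end Stochastic

namespace EuclideanSpace

variable {ι κ : Type*} [Fintype ι] [Fintype κ]

theorem sum_abs_apply_le_sqrt_card_mul_norm (x : EuclideanSpace ℝ (ι × κ)) (i : ι) :
    ∑ k, |x (i, k)| ≤ √(Fintype.card κ) * ‖x‖ := by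
  refine le_of_pow_le_pow_left₀ two_ne_zero (by positivity) ?_
  calc (∑ k, |x (i, k)|) ^ 2 ≤ Fintype.card κ * ∑ k, |x (i, k)| ^ 2 :=
        sq_sum_le_card_mul_sum_sq
    _ ≤ Fintype.card κ * ∑ p, x p ^ 2 := by
        gcongr
        simp only [sq_abs, Fintype.sum_prod_type]
        exact single_le_sum (f := fun i => ∑ k, x (i, k) ^ 2)
          (fun _ _ => sum_nonneg fun _ _ => sq_nonneg _) (mem_univ i)
    _ = (√(Fintype.card κ) * ‖x‖) ^ 2 := by
        rw [mul_pow, Real.sq_sqrt (Nat.cast_nonneg _), real_norm_sq_eq]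

theorem norm_le_sqrt_card_mul_sum_of_abs_apply_le (x : EuclideanSpace ℝ (ι × κ)) {u : ι → ℝ}
    (hu₀ : ∀ i, 0 ≤ u i) (hu : ∀ p, |x p| ≤ u p.1) : ‖x‖ ≤ √(Fintype.card κ) * ∑ i, u i := by
  refine le_of_pow_le_pow_left₀ two_ne_zero
    (mul_nonneg (Real.sqrt_nonneg _) (sum_nonneg fun i _ => hu₀ i)) ?_
  calc ‖x‖ ^ 2 ≤ ∑ p : ι × κ, u p.1 ^ 2 := by
        rw [real_norm_sq_eq]
        exact sum_le_sum fun p _ => sq_le_sq' (abs_le.1 (hu p)).1 (abs_le.1 (hu p)).2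
    _ = Fintype.card κ * ∑ i, u i ^ 2 := by
        simp [Fintype.sum_prod_type, mul_sum]
    _ ≤ Fintype.card κ * (∑ i, u i) ^ 2 := by
        gcongr
        exact sum_sq_le_sq_sum_of_nonneg fun i _ => hu₀ i
    _ = (√(Fintype.card κ) * ∑ i, u i) ^ 2 := by
        rw [mul_pow, Real.sq_sqrt (Nat.cast_nonneg _)]

end EuclideanSpace

namespace FinMDP

variable {M : FinMDP} (hM : M.Valid) {π π' : M.S → M.A → ℝ}

theorem dvisit_eq (s₀ : M.S) :
    M.dvisit π s₀ = (1 - M.γ) • fun s => ∑' t, M.γ ^ t * (M.Pmat π ^ t) s₀ s :=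
  rfl

include hM

theorem isDist_P (s : M.S) (a : M.A) : IsDist (M.P s a) :=
  ⟨hM.1 s a, hM.2.1 s a⟩

theorem norm_r_le (s : M.S) : ‖M.r s‖ ≤ 1 :=
  (pi_norm_le_iff_of_nonneg zero_le_one).2 fun a => by
    rw [Real.norm_of_nonneg (hM.2.2.1 s a).1]
    exact (hM.2.2.1 s a).2

theorem Pmat_mem_rowStochastic (hπ : M.IsPolicy π) : M.Pmat π ∈ rowStochastic ℝ M.S := by
  refine mem_rowStochastic_iff_sum.2 ⟨fun s s' => sum_nonneg fun a _ =>
    mul_nonneg (hπ.1 s a) (hM.1 s a s'), fun s => ?_⟩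
  simp only [Pmat, of_apply]
  rw [sum_comm]
  simp_rw [← mul_sum, hM.2.1, mul_one]
  exact hπ.2 s

theorem norm_rPol_le_s19 (hπ : M.IsPolicy π) : ‖M.rPol π‖ ≤ 1 :=
  (pi_norm_le_iff_of_nonneg zero_le_one).2 fun s =>
    (IsDist.abs_sum_mul_le ⟨hπ.1 s, hπ.2 s⟩ (M.r s)).trans (norm_r_le hM s)

theorem norm_V_le (hπ : M.IsPolicy π) : ‖M.V π‖ ≤ (1 - M.γ)⁻¹ := by
  rw [inv_eq_one_div]
  exact (norm_discounted_mulVec_le hM.2.2.2.1 hM.2.2.2.2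
    (Pmat_mem_rowStochastic hM hπ) (M.rPol π)).trans
      (div_le_div_of_nonneg_right (norm_rPol_le_s19 hM hπ) (by linarith [hM.2.2.2.2]))

theorem V_bellman (hπ : M.IsPolicy π) : M.V π = M.rPol π + M.γ • M.Pmat π *ᵥ M.V π :=
  discounted_mulVec_eq hM.2.2.2.1 hM.2.2.2.2 (Pmat_mem_rowStochastic hM hπ) (M.rPol π)

theorem abs_Qf_le (hπ : M.IsPolicy π) (s : M.S) (a : M.A) : |M.Qf π s a| ≤ (1 - M.γ)⁻¹ := by
  have hγ₀ := hM.2.2.2.1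
  have hγ : 1 - M.γ ≠ 0 := by linarith [hM.2.2.2.2]
  calc |M.Qf π s a| ≤ 1 + M.γ * (1 - M.γ)⁻¹ := by
        refine (abs_add_le _ _).trans (add_le_add ?_ ?_)
        · exact (norm_le_pi_norm (M.r s) a).trans (norm_r_le hM s)
        rw [abs_mul, abs_of_nonneg hγ₀]
        exact mul_le_mul_of_nonneg_left ((isDist_P hM s a).abs_sum_mul_le _ |>.trans
          (norm_V_le hM hπ)) hγ₀
    _ = (1 - M.γ)⁻¹ := by field_simp; ring

theorem dvisit_nonneg (hπ : M.IsPolicy π) (s₀ s : M.S) : 0 ≤ M.dvisit π s₀ s :=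
  mul_nonneg (by linarith [hM.2.2.2.2]) (tsum_nonneg fun t => mul_nonneg (pow_nonneg hM.2.2.2.1 t)
    (nonneg_of_mem_rowStochastic (pow_mem (Pmat_mem_rowStochastic hM hπ) t)))

theorem sum_dvisit (hπ : M.IsPolicy π) (s₀ : M.S) : ∑ s, M.dvisit π s₀ s = 1 := by
  rw [dvisit_eq]
  simp only [Pi.smul_apply, smul_eq_mul, ← mul_sum,
    sum_discounted_apply hM.2.2.2.1 hM.2.2.2.2 (Pmat_mem_rowStochastic hM hπ)]
  exact mul_inv_cancel₀ (by linarith [hM.2.2.2.2])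

theorem dvisit_bellman (hπ : M.IsPolicy π) (s₀ : M.S) :
    M.dvisit π s₀ = (1 - M.γ) • Pi.single s₀ 1 + M.γ • M.dvisit π s₀ ᵥ* M.Pmat π := by
  conv_lhs => rw [dvisit_eq, discounted_apply_eq hM.2.2.2.1 hM.2.2.2.2
    (Pmat_mem_rowStochastic hM hπ)]
  rw [dvisit_eq, smul_add, smul_vecMul, smul_comm]

section Perturbation

variable (hπ : M.IsPolicy π) (hπ' : M.IsPolicy π') {ε : ℝ}
  (hrow : ∀ s, ∑ a, |π s a - π' s a| ≤ ε)
include hrow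

theorem norm_rPol_sub_le (hε : 0 ≤ ε) : ‖M.rPol π - M.rPol π'‖ ≤ ε := by
  refine (pi_norm_le_iff_of_nonneg hε).2 fun s => ?_
  simp only [Pi.sub_apply, rPol, ← sum_sub_distrib, ← sub_mul, Real.norm_eq_abs]
  exact (abs_sum_mul_le_sum_abs_mul_norm _ _).trans
    ((mul_le_mul (hrow s) (norm_r_le hM s) (norm_nonneg _) hε).trans_eq (mul_one ε))

theorem sum_abs_Pmat_sub_le (s : M.S) : ∑ s', |(M.Pmat π - M.Pmat π') s s'| ≤ ε := by
  have hrows (a : M.A) : ∑ s', |of (fun a s' => M.P s a s') a s'| ≤ 1 :=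
    (isDist_P hM s a).sum_abs_eq_one.le
  have hvec : (M.Pmat π - M.Pmat π') s = (π s - π' s) ᵥ* of fun a s' => M.P s a s' := by
    ext s'
    simp only [Matrix.sub_apply, Pmat, of_apply, vecMul, dotProduct, Pi.sub_apply, sub_mul,
      sum_sub_distrib]
  rw [← one_mul ε]
  exact hvec ▸ (sum_abs_vecMul_le_of_sum_abs_le hrows _).trans (by gcongr; exact hrow s)

include hπ hπ'

theorem norm_V_sub_le (hε : 0 ≤ ε) : ‖M.V π - M.V π'‖ ≤ ε / (1 - M.γ) ^ 2 := by
  have hγ₀ := hM.2.2.2.1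
  have hγ : 0 < 1 - M.γ := by linarith [hM.2.2.2.2]
  have hsplit : M.V π - M.V π' = (M.rPol π - M.rPol π') +
      M.γ • (M.Pmat π - M.Pmat π') *ᵥ M.V π' + M.γ • M.Pmat π *ᵥ (M.V π - M.V π') := by
    conv_lhs => rw [V_bellman hM hπ, V_bellman hM hπ']
    rw [sub_mulVec, mulVec_sub]
    module
  have hPV : ‖(M.Pmat π - M.Pmat π') *ᵥ M.V π'‖ ≤ ε * (1 - M.γ)⁻¹ :=
    (norm_mulVec_le_of_sum_abs_le hε (sum_abs_Pmat_sub_le hM hrow) _).trans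
      (mul_le_mul_of_nonneg_left (norm_V_le hM hπ') hε)
  have hrec : ‖M.V π - M.V π'‖ ≤ ε + M.γ * (ε * (1 - M.γ)⁻¹) + M.γ * ‖M.V π - M.V π'‖ := by
    calc ‖M.V π - M.V π'‖ ≤ ‖M.rPol π - M.rPol π'‖ +
          ‖M.γ • (M.Pmat π - M.Pmat π') *ᵥ M.V π'‖ + ‖M.γ • M.Pmat π *ᵥ (M.V π - M.V π')‖ :=
          (congrArg norm hsplit).trans_le (norm_add₃_le ..)
      _ ≤ _ := by
          rw [norm_smul, norm_smul, Real.norm_of_nonneg hγ₀]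
          gcongr
          · exact norm_rPol_sub_le hM hrow hε
          · exact norm_mulVec_le_of_mem_rowStochastic (Pmat_mem_rowStochastic hM hπ) _
  rw [le_div_iff₀ (by positivity)]
  have : ε + M.γ * (ε * (1 - M.γ)⁻¹) = ε * (1 - M.γ)⁻¹ := by field_simp; ring
  nlinarith [mul_inv_cancel₀ hγ.ne']

theorem abs_Qf_sub_le (hε : 0 ≤ ε) (s : M.S) (a : M.A) :
    |M.Qf π s a - M.Qf π' s a| ≤ M.γ * (ε / (1 - M.γ) ^ 2) := by
  have hγ₀ := hM.2.2.2.1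
  have hQ : M.Qf π s a - M.Qf π' s a = M.γ * ∑ s', M.P s a s' * (M.V π - M.V π') s' := by
    simp only [Qf, Pi.sub_apply, mul_sub, sum_sub_distrib]
    ring
  rw [hQ, abs_mul, abs_of_nonneg hγ₀]
  exact mul_le_mul_of_nonneg_left (((isDist_P hM s a).abs_sum_mul_le _).trans
    (norm_V_sub_le hM hπ hπ' hrow hε)) hγ₀

theorem sum_abs_dvisit_sub_le (s₀ : M.S) :
    ∑ s, |M.dvisit π s₀ s - M.dvisit π' s₀ s| ≤ M.γ * ε / (1 - M.γ) := by
  have hγ₀ := hM.2.2.2.1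
  have hγ : 0 < 1 - M.γ := by linarith [hM.2.2.2.2]
  set Δ := M.dvisit π s₀ - M.dvisit π' s₀ with hΔ
  have hsplit : Δ = M.γ • (Δ ᵥ* M.Pmat π + M.dvisit π' s₀ ᵥ* (M.Pmat π - M.Pmat π')) := by
    rw [hΔ]
    conv_lhs => rw [dvisit_bellman hM hπ, dvisit_bellman hM hπ']
    rw [vecMul_sub, sub_vecMul]
    module
  have hrec : ∑ s, |Δ s| ≤ M.γ * (∑ s, |Δ s| + ε) := by
    calc ∑ s, |Δ s| ≤ M.γ * (∑ s, |(Δ ᵥ* M.Pmat π) s| +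
          ∑ s, |(M.dvisit π' s₀ ᵥ* (M.Pmat π - M.Pmat π')) s|) := by
          conv_lhs => rw [hsplit]
          simp only [Pi.smul_apply, Pi.add_apply, smul_eq_mul, abs_mul, abs_of_nonneg hγ₀,
            ← mul_sum, ← sum_add_distrib]
          gcongr
          exact abs_add_le _ _
      _ ≤ M.γ * (1 * ∑ s, |Δ s| + ε * ∑ s, |M.dvisit π' s₀ s|) := by
          gcongr
          · exact sum_abs_vecMul_le_of_sum_abs_le
              (fun s => (sum_abs_row_of_mem_rowStochastic (Pmat_mem_rowStochastic hM hπ) s).le) _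
          · exact sum_abs_vecMul_le_of_sum_abs_le (sum_abs_Pmat_sub_le hM hrow) _
      _ = M.γ * (∑ s, |Δ s| + ε) := by
          rw [one_mul, IsDist.sum_abs_eq_one ⟨dvisit_nonneg hM hπ' s₀, sum_dvisit hM hπ' s₀⟩,
            mul_one]
  change ∑ s, |Δ s| ≤ _
  rw [le_div_iff₀ hγ]
  linarith

theorem abs_grad_sub_le (hε : 0 ≤ ε) (s₀ s : M.S) (a : M.A) :
    |1 / (1 - M.γ) * M.dvisit π s₀ s * M.Qf π s a -
        1 / (1 - M.γ) * M.dvisit π' s₀ s * M.Qf π' s a| ≤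
      (|M.dvisit π s₀ s - M.dvisit π' s₀ s| + M.γ * ε / (1 - M.γ) * M.dvisit π' s₀ s) /
        (1 - M.γ) ^ 2 := by
  have hγ : 0 < 1 - M.γ := by linarith [hM.2.2.2.2]
  have hd' := dvisit_nonneg hM hπ' s₀ s
  calc _ = (1 - M.γ)⁻¹ * |(M.dvisit π s₀ s - M.dvisit π' s₀ s) * M.Qf π s a +
          M.dvisit π' s₀ s * (M.Qf π s a - M.Qf π' s a)| := by
        rw [← abs_of_pos (inv_pos.2 hγ), ← abs_mul]
        ring_nf
    _ ≤ (1 - M.γ)⁻¹ * (|M.dvisit π s₀ s - M.dvisit π' s₀ s| * (1 - M.γ)⁻¹ +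
          M.dvisit π' s₀ s * (M.γ * (ε / (1 - M.γ) ^ 2))) := by
        gcongr
        refine (abs_add_le _ _).trans (add_le_add ?_ ?_)
        · rw [abs_mul]
          exact mul_le_mul_of_nonneg_left (abs_Qf_le hM hπ s a) (abs_nonneg _)
        · rw [abs_mul, abs_of_nonneg hd']
          exact mul_le_mul_of_nonneg_left (abs_Qf_sub_le hM hπ hπ' hrow hε s a) hd'
    _ = _ := by field_simp

theorem sum_grad_sub_bound_le (s₀ : M.S) :
    ∑ s, (|M.dvisit π s₀ s - M.dvisit π' s₀ s| + M.γ * ε / (1 - M.γ) * M.dvisit π' s₀ s) /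
        (1 - M.γ) ^ 2 ≤ 2 * M.γ * ε / (1 - M.γ) ^ 3 := by
  have hγ : 0 < 1 - M.γ := by linarith [hM.2.2.2.2]
  rw [← sum_div, sum_add_distrib, ← mul_sum, sum_dvisit hM hπ' s₀, mul_one]
  calc _ ≤ (M.γ * ε / (1 - M.γ) + M.γ * ε / (1 - M.γ)) / (1 - M.γ) ^ 2 := by
        gcongr
        exact sum_abs_dvisit_sub_le hM hπ hπ' hrow s₀
    _ = 2 * M.γ * ε / (1 - M.γ) ^ 3 := by field_simp; ring

end Perturbation

end FinMDP

/-- **Smoothness of the value function under the direct parameterization.** -/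
theorem value_gradient_lipschitz_direct (M : FinMDP) (hM : M.Valid) (s₀ : M.S)
    -- `g π` is the policy gradient vector `∇_π V^π(s₀)`
    (g : (M.S → M.A → ℝ) → EuclideanSpace ℝ (M.S × M.A))
    (hg : ∀ (π : M.S → M.A → ℝ) (p : M.S × M.A),
        g π p = (1 / (1 - M.γ)) * M.dvisit π s₀ p.1 * M.Qf π p.1 p.2) :
    ∀ π π' : EuclideanSpace ℝ (M.S × M.A),
      M.IsPolicy (fun s a => π (s, a)) → M.IsPolicy (fun s a => π' (s, a)) →
      ‖g (fun s a => π (s, a)) - g (fun s a => π' (s, a))‖ ≤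
        2 * M.γ * (Fintype.card M.A : ℝ) / (1 - M.γ) ^ 3 * ‖π - π'‖ := by
  intro π π' hπ hπ'
  set σ : M.S → M.A → ℝ := fun s a => π (s, a)
  set σ' : M.S → M.A → ℝ := fun s a => π' (s, a)
  have hγ : 0 < 1 - M.γ := by linarith [hM.2.2.2.2]
  set ε := √(Fintype.card M.A) * ‖π - π'‖ with hε_def
  have hε : 0 ≤ ε := by positivity
  have hrow (s : M.S) : ∑ a, |σ s a - σ' s a| ≤ ε :=
    EuclideanSpace.sum_abs_apply_le_sqrt_card_mul_norm (π - π') s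
  set u : M.S → ℝ := fun s => (|M.dvisit σ s₀ s - M.dvisit σ' s₀ s| +
    M.γ * ε / (1 - M.γ) * M.dvisit σ' s₀ s) / (1 - M.γ) ^ 2
  have hu_nonneg (s : M.S) : 0 ≤ u s :=
    div_nonneg (add_nonneg (abs_nonneg _) (mul_nonneg (div_nonneg (mul_nonneg hM.2.2.2.1 hε)
      hγ.le) (FinMDP.dvisit_nonneg hM hπ' s₀ s))) (by positivity)
  have hA : √(Fintype.card M.A : ℝ) * √(Fintype.card M.A) = Fintype.card M.A :=
    Real.mul_self_sqrt (Nat.cast_nonneg _)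
  calc ‖g σ - g σ'‖ ≤ √(Fintype.card M.A) * ∑ s, u s :=
        EuclideanSpace.norm_le_sqrt_card_mul_sum_of_abs_apply_le _ hu_nonneg fun p => by
          rw [PiLp.sub_apply, hg, hg]
          exact FinMDP.abs_grad_sub_le hM hπ hπ' hrow hε s₀ p.1 p.2
    _ ≤ √(Fintype.card M.A) * (2 * M.γ * ε / (1 - M.γ) ^ 3) := by
        gcongr
        exact FinMDP.sum_grad_sub_bound_le hM hπ hπ' hrow s₀
    _ = _ := by
        rw [hε_def]
        linear_combination 2 * M.γ * ‖π - π'‖ / (1 - M.γ) ^ 3 * hA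
end
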